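/- arXiv:1001.1406 — 2 statements merged into one kernel-verified Lean document; each statement's English description precedes it below -/
import Mathlib

section
/- Let p > 3 be a prime. The number of nonzero vectors (v₁,v₂,v₃,v₄) ∈ 𝔽_p⁴ with F(v₁,v₂,v₃,v₄) = 0 equals p³ + p² − p − 1 if p ≡ 1 (mod 4), and equals p³ − p² + p − 1 if p ≡ 3 (mod 4). -/
/-!
In the coordinates `x = v₀ - v₁`, `y = v₂ - v₃`, `u = v₀ + v₁`, `w = 2 (v₂ + v₃)` the Descartes
form becomes `x² + y² - u w`. For fixed `(x, y)` the hyperbola `u w = c` has `q - 1` points if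
`c ≠ 0` and `2q - 1` if `c = 0`, so the cone has `q² (q - 1) + q Z` points, where `Z` counts the
zeros of `x² + y²`. If `-1 = i²` then `x² + y² = (x + i y)(x - i y)` and `Z = 2q - 1`;
otherwise `Z = 1`. For `q = p` the square case is `p ≡ 1 (mod 4)`.
-/

/-- The Descartes quadratic form over a commutative ring. -/
def descartesForm {R : Type*} [CommRing R] (v : Fin 4 → R) : R :=
  2 * (∑ i, v i ^ 2) - (∑ i, v i) ^ 2

variable {K : Type*} [Field K]

theorem card_mul_eq_of_ne_zero {c : K} (hc : c ≠ 0) :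
    Nat.card {x : K × K // x.1 * x.2 = c} = Nat.card K - 1 := by
  rw [← Nat.card_units]
  exact Nat.card_congr
    { toFun x := Units.mk0 x.1.1 (left_ne_zero_of_mul (x.2.trans_ne hc))
      invFun u := ⟨(u, u⁻¹ * c), Units.mul_inv_cancel_left u c⟩
      left_inv x := by
        obtain ⟨⟨a, b⟩, hab⟩ := x
        have ha : a ≠ 0 := left_ne_zero_of_mul (hab.trans_ne hc)
        ext
        · rfl
        · simp [← hab, ha]
      right_inv u := Units.ext rfl }

theorem card_mul_eq_zero [Fintype K] :
    Nat.card {x : K × K // x.1 * x.2 = 0} = 2 * Nat.card K - 1 := by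
  classical
  have hunits : Nat.card {x : K × K // ¬x.1 * x.2 = 0} = (Nat.card K - 1) * (Nat.card K - 1) := by
    simp_rw [mul_eq_zero, not_or]
    rw [← Nat.card_units, ← Nat.card_prod]
    exact Nat.card_congr <|
      Equiv.subtypeProdEquivProd.trans (unitsEquivNeZero.prodCongr unitsEquivNeZero).symm
  rw [Nat.card_eq_fintype_card, Nat.card_eq_fintype_card] at hunits ⊢
  rw [Fintype.card_subtype_compl, Fintype.card_prod] at hunits
  obtain ⟨n, hn⟩ : ∃ n, Fintype.card K = n + 1 :=
    Nat.exists_eq_succ_of_ne_zero Fintype.card_ne_zero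
  have hle : Fintype.card {x : K × K // x.1 * x.2 = 0} ≤ Fintype.card K * Fintype.card K :=
    Fintype.card_prod K K ▸ Fintype.card_subtype_le _
  rw [hn] at hunits hle ⊢
  rw [Nat.add_sub_cancel, Nat.sub_eq_iff_eq_add hle] at hunits
  rw [show 2 * (n + 1) - 1 = 2 * n + 1 by omega]
  linarith

theorem card_mul_eq [Fintype K] [DecidableEq K] (c : K) :
    Nat.card {x : K × K // x.1 * x.2 = c} =
      Nat.card K - 1 + if c = 0 then Nat.card K else 0 := by
  split_ifs with hc
  · subst hc
    have : 0 < Nat.card K := Nat.card_pos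
    rw [card_mul_eq_zero]
    omega
  · rw [card_mul_eq_of_ne_zero hc, add_zero]

theorem card_mul_eq_fiberwise {α : Type*} [Fintype α] [Fintype K] (f : α → K) :
    Nat.card {q : α × (K × K) // q.2.1 * q.2.2 = f q.1} =
      Nat.card α * (Nat.card K - 1) + Nat.card K * Nat.card {a // f a = 0} := by
  classical
  rw [Nat.card_congr (Equiv.subtypeProdEquivSigmaSubtype fun a (x : K × K) => x.1 * x.2 = f a),
    Nat.card_sigma]
  simp_rw [card_mul_eq]
  rw [Finset.sum_add_distrib, Finset.sum_const, Finset.sum_ite, Finset.sum_const,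
    Finset.sum_const_zero]
  simp [Nat.card_eq_fintype_card, Fintype.card_subtype, mul_comm]

theorem card_sq_add_sq_eq_zero_of_isSquare [Fintype K] (h2 : (2 : K) ≠ 0)
    (h : IsSquare (-1 : K)) :
    Nat.card {z : K × K // z.1 ^ 2 + z.2 ^ 2 = 0} = 2 * Nat.card K - 1 := by
  obtain ⟨i, hi⟩ := h
  have hi0 : i ≠ 0 := by rintro rfl; simp at hi
  let e : K × K ≃ K × K :=
    { toFun z := (z.1 + i * z.2, z.1 - i * z.2)
      invFun x := ((x.1 + x.2) / 2, (x.1 - x.2) / (2 * i))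
      left_inv z := by ext <;> field_simp <;> ring
      right_inv x := by ext <;> field_simp <;> ring }
  rw [← card_mul_eq_zero]
  exact Nat.card_congr <| e.subtypeEquiv fun z => by
    show _ ↔ (z.1 + i * z.2) * (z.1 - i * z.2) = 0
    rw [show (z.1 + i * z.2) * (z.1 - i * z.2) = z.1 ^ 2 + z.2 ^ 2 by
      linear_combination z.2 ^ 2 * hi]

theorem sq_add_sq_eq_zero_iff_of_not_isSquare (h : ¬IsSquare (-1 : K)) {a b : K} :
    a ^ 2 + b ^ 2 = 0 ↔ a = 0 ∧ b = 0 := by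
  refine ⟨fun hab => ?_, fun ⟨ha, hb⟩ => by simp [ha, hb]⟩
  have hb : b = 0 := by
    by_contra hb
    refine h ⟨a / b, ?_⟩
    rw [div_mul_div_comm, eq_div_iff (mul_ne_zero hb hb)]
    linear_combination -hab
  subst hb
  simpa using hab

theorem card_sq_add_sq_eq_zero_of_not_isSquare (h : ¬IsSquare (-1 : K)) :
    Nat.card {z : K × K // z.1 ^ 2 + z.2 ^ 2 = 0} = 1 := by
  simp_rw [sq_add_sq_eq_zero_iff_of_not_isSquare h, ← Prod.mk_eq_zero]
  simp

theorem descartesForm_eq {R : Type*} [CommRing R] (v : Fin 4 → R) :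
    descartesForm v =
      (v 0 - v 1) ^ 2 + (v 2 - v 3) ^ 2 - (v 0 + v 1) * (2 * (v 2 + v 3)) := by
  simp only [descartesForm, Fin.sum_univ_four]
  ring

def descartesCoords (h2 : (2 : K) ≠ 0) : (Fin 4 → K) ≃ (K × K) × (K × K) where
  toFun v := ((v 0 - v 1, v 2 - v 3), (v 0 + v 1, 2 * (v 2 + v 3)))
  invFun q := ![(q.2.1 + q.1.1) / 2, (q.2.1 - q.1.1) / 2,
    (q.2.2 / 2 + q.1.2) / 2, (q.2.2 / 2 - q.1.2) / 2]
  left_inv v := by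
    ext i
    fin_cases i <;> simp <;> field_simp <;> ring
  right_inv q := by
    ext <;> simp <;> field_simp <;> ring

theorem card_descartesForm_eq_zero (h2 : (2 : K) ≠ 0) :
    Nat.card {v : Fin 4 → K // descartesForm v = 0} =
      Nat.card {q : (K × K) × (K × K) // q.2.1 * q.2.2 = q.1.1 ^ 2 + q.1.2 ^ 2} :=
  Nat.card_congr <| (descartesCoords h2).subtypeEquiv fun v => by
    rw [descartesForm_eq, sub_eq_zero, eq_comm]
    rfl

theorem card_descartesForm_nonzero_zeros_add_one [Fintype K] (h2 : (2 : K) ≠ 0) :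
    Nat.card {v : Fin 4 → K | v ≠ 0 ∧ descartesForm v = 0} + 1 =
      Nat.card K ^ 2 * (Nat.card K - 1) +
        Nat.card K * Nat.card {z : K × K // z.1 ^ 2 + z.2 ^ 2 = 0} := by
  have hcone : {v : Fin 4 → K | v ≠ 0 ∧ descartesForm v = 0} =
      {v | descartesForm v = 0} \ {0} := by
    ext v
    simp [and_comm]
  rw [hcone, Nat.card_coe_set_eq, Set.ncard_sdiff_singleton_add_one (by simp [descartesForm]),
    ← Nat.card_coe_set_eq, Set.coe_ofPred, card_descartesForm_eq_zero h2, sq, ← Nat.card_prod]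
  exact card_mul_eq_fiberwise fun z : K × K => z.1 ^ 2 + z.2 ^ 2

theorem stmt3_general (p : ℕ) (hp : p.Prime) :
    (p % 4 = 1 →
      Nat.card {v : Fin 4 → ZMod p | v ≠ 0 ∧ descartesForm v = 0} = p ^ 3 + p ^ 2 - p - 1) ∧
    (p % 4 = 3 →
      Nat.card {v : Fin 4 → ZMod p | v ≠ 0 ∧ descartesForm v = 0} = p ^ 3 - p ^ 2 + p - 1) := by
  have := Fact.mk hp
  have h2 (hodd : p % 2 = 1) : (2 : ZMod p) ≠ 0 :=
    Ring.two_ne_zero (by rw [ZMod.ringChar_zmod_n]; omega)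
  obtain ⟨n, rfl⟩ : ∃ n, p = n + 1 := Nat.exists_eq_succ_of_ne_zero hp.ne_zero
  refine ⟨fun hp4 => ?_, fun hp4 => ?_⟩
  · have hcone := card_descartesForm_nonzero_zeros_add_one (h2 (by omega))
    rw [card_sq_add_sq_eq_zero_of_isSquare (h2 (by omega))
      (ZMod.exists_sq_eq_neg_one_iff.mpr (by omega)), Nat.card_zmod, Nat.add_sub_cancel,
      show 2 * (n + 1) - 1 = 2 * n + 1 by omega] at hcone
    ring_nf at hcone ⊢
    omega
  · have hcone := card_descartesForm_nonzero_zeros_add_one (h2 (by omega))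
    rw [card_sq_add_sq_eq_zero_of_not_isSquare
      (fun h => ZMod.exists_sq_eq_neg_one_iff.mp h (by omega)), Nat.card_zmod,
      Nat.add_sub_cancel] at hcone
    rw [show (n + 1) ^ 3 = (n + 1) ^ 2 + (n + 1) ^ 2 * n by ring, Nat.add_sub_cancel_left]
    omega

theorem stmt3 (p : ℕ) (hp : p.Prime) (hp3 : 3 < p) :
    (p % 4 = 1 →
      Nat.card {v : Fin 4 → ZMod p | v ≠ 0 ∧ descartesForm v = 0} = p ^ 3 + p ^ 2 - p - 1) ∧
    (p % 4 = 3 →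
      Nat.card {v : Fin 4 → ZMod p | v ≠ 0 ∧ descartesForm v = 0} = p ^ 3 - p ^ 2 + p - 1) :=
  stmt3_general p hp
end

section
/- Let p > 3 be a prime and let β(p) denote the ratio of the number of nonzero (v₁,v₂,v₃) ∈ 𝔽_p³ with F(v₁,v₂,v₃,0) = 0 to the number of nonzero (v₁,v₂,v₃,v₄) ∈ 𝔽_p⁴ with F(v₁,v₂,v₃,v₄) = 0. Then β(p) = 1/(p+1) if p ≡ 1 (mod 4), and β(p) = (p+1)/(p²+1) if p ≡ 3 (mod 4). -/
open Finset

lemma natCard_setOf_ne_zero_and_add_one {V : Type*} [Fintype V] [Zero V] [DecidableEq V]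
    {P : V → Prop} [DecidablePred P] (h0 : P 0) :
    Nat.card {v : V | v ≠ 0 ∧ P v} + 1 = #{v | P v} := by
  rw [Nat.card_coe_set_eq, Set.ncard_eq_toFinset_card', ← card_erase_add_one (s := {v | P v})
    (mem_filter.2 ⟨mem_univ 0, h0⟩)]
  congr 2
  ext v
  simp

lemma descartesForm_three_eq_sq_sub_mul {R : Type*} [CommRing R] (a b c : R) :
    descartesForm ![a, b, c, 0] = (a - b - c) ^ 2 - 2 * b * (2 * c) := by
  simp only [descartesForm, Fin.sum_univ_four, Matrix.cons_val]
  ring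

lemma descartesForm_eq_sq_add_sq_sub_mul {R : Type*} [CommRing R] (v : Fin 4 → R) :
    descartesForm v = (v 0 - v 1 - v 2 - v 3) ^ 2 + (2 * v 1) ^ 2
      - 2 * (v 1 + v 2) * (2 * (v 1 + v 3)) := by
  rw [descartesForm, Fin.sum_univ_four, Fin.sum_univ_four]
  ring

section
variable {K : Type*} [Field K] [Fintype K] [DecidableEq K]

local notation "q" => Fintype.card K

lemma card_filter_mul_eq (t : K) :
    #{z : K × K | z.1 * z.2 = t} = (q - 1) + if t = 0 then q else 0 := by
  rw [card_filter, Fintype.sum_prod_type, ← add_sum_erase _ _ (mem_univ 0)]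
  have hfib : ∀ x ∈ univ.erase (0 : K), ∑ y, (if x * y = t then 1 else 0) = 1 := by
    intro x hx
    simp_rw [← eq_inv_mul_iff_mul_eq₀ (ne_of_mem_erase hx)]
    simp
  rw [sum_congr rfl hfib]
  simp [add_comm, @eq_comm _ 0 t]

lemma card_filter_eq_mul {A : Type*} [Fintype A] (f : A → K) :
    #{z : A × K × K | f z.1 = z.2.1 * z.2.2} =
      (q - 1) * Fintype.card A + q * #{a | f a = 0} := by
  have hfib : ∀ a, ∑ xy : K × K, (if f a = xy.1 * xy.2 then 1 else 0) =
      (q - 1) + if f a = 0 then q else 0 := fun a => by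
    simp_rw [← card_filter_mul_eq, card_filter, @eq_comm _ (f a)]
  rw [card_filter, Fintype.sum_prod_type, sum_congr rfl fun a _ => hfib a, sum_add_distrib,
    card_filter, sum_const, card_univ, mul_sum, smul_eq_mul, mul_comm]
  simp

lemma card_filter_sq_add_sq_eq_zero (h2 : (2 : K) ≠ 0) :
    #{us : K × K | us.1 ^ 2 + us.2 ^ 2 = 0} =
      if IsSquare (-1 : K) then 2 * q - 1 else 1 := by
  split_ifs with hi
  · obtain ⟨i, hi⟩ := hi
    have hi0 : i ≠ 0 := by rintro rfl; simp at hi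
    let e : K × K ≃ K × K :=
      { toFun us := (us.1 + i * us.2, us.1 - i * us.2)
        invFun xy := ((xy.1 + xy.2) / 2, (xy.1 - xy.2) / (2 * i))
        left_inv us := by ext <;> field_simp <;> ring
        right_inv xy := by ext <;> field_simp <;> ring }
    rw [card_equiv e (t := {z : K × K | z.1 * z.2 = 0}), card_filter_mul_eq]
    · rw [if_pos rfl]; omega
    · intro us
      simp only [mem_filter, mem_univ, true_and]
      show _ ↔ (us.1 + i * us.2) * (us.1 - i * us.2) = 0
      constructor <;> intro h
      · linear_combination h + us.2 ^ 2 * hi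
      · linear_combination h - us.2 ^ 2 * hi
  · rw [card_eq_one]
    refine ⟨(0, 0), ?_⟩
    ext ⟨u, s⟩
    simp only [mem_filter, mem_univ, true_and, mem_singleton, Prod.mk.injEq]
    constructor
    · intro h
      have hs : s = 0 := by
        by_contra hs
        exact hi ⟨u / s, by field_simp; linear_combination -h⟩
      subst hs
      simpa using h
    · rintro ⟨rfl, rfl⟩
      simp

lemma card_filter_descartesForm_three_eq_zero (h2 : (2 : K) ≠ 0) :
    #{v : Fin 3 → K | descartesForm ![v 0, v 1, v 2, 0] = 0} = q ^ 2 := by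
  let e : (Fin 3 → K) ≃ K × K × K :=
    { toFun v := (v 0 - v 1 - v 2, 2 * v 1, 2 * v 2)
      invFun z := ![z.1 + z.2.1 / 2 + z.2.2 / 2, z.2.1 / 2, z.2.2 / 2]
      left_inv v := by
        funext i; fin_cases i <;> simp [h2]; ring
      right_inv z := by ext <;> simp [mul_div_cancel₀ _ h2]; ring }
  rw [card_equiv e (t := {z : K × K × K | z.1 ^ 2 = z.2.1 * z.2.2}), card_filter_eq_mul (· ^ 2),
    show #{u : K | u ^ 2 = 0} = 1 by simp [filter_eq']]
  · have := Fintype.card_pos (α := K)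
    zify [this]
    ring
  · intro v
    simp only [mem_filter, mem_univ, true_and, descartesForm_three_eq_sq_sub_mul, sub_eq_zero]
    rfl

lemma card_filter_descartesForm_eq_zero (h2 : (2 : K) ≠ 0) :
    (#{v : Fin 4 → K | descartesForm v = 0} : ℤ) =
      if IsSquare (-1 : K) then (q : ℤ) ^ 3 + q ^ 2 - q else (q : ℤ) ^ 3 - q ^ 2 + q := by
  let e : (Fin 4 → K) ≃ (K × K) × K × K :=
    { toFun v := ((v 0 - v 1 - v 2 - v 3, 2 * v 1), 2 * (v 1 + v 2), 2 * (v 1 + v 3))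
      invFun z := ![z.1.1 + z.2.1 / 2 + z.2.2 / 2 - z.1.2 / 2, z.1.2 / 2,
        z.2.1 / 2 - z.1.2 / 2, z.2.2 / 2 - z.1.2 / 2]
      left_inv v := by
        funext i; fin_cases i <;> simp [h2]; ring
      right_inv z := by ext <;> simp [mul_div_cancel₀ _ h2]; ring }
  rw [card_equiv e (t := {z : (K × K) × K × K | z.1.1 ^ 2 + z.1.2 ^ 2 = z.2.1 * z.2.2}),
    card_filter_eq_mul (fun us : K × K => us.1 ^ 2 + us.2 ^ 2),
    card_filter_sq_add_sq_eq_zero h2]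
  · have := Fintype.card_pos (α := K)
    split_ifs
    · zify [this, (by omega : 1 ≤ 2 * q)]
      simp only [Fintype.card_prod]
      push_cast
      ring
    · zify [this]
      simp only [Fintype.card_prod]
      push_cast
      ring
  · intro v
    simp only [mem_filter, mem_univ, true_and, descartesForm_eq_sq_add_sq_sub_mul, sub_eq_zero]
    rfl

theorem ratio_natCard_descartesForm_zeros (h2 : (2 : K) ≠ 0) :
    (Nat.card {v : Fin 3 → K | v ≠ 0 ∧ descartesForm ![v 0, v 1, v 2, 0] = 0} : ℚ) /
        (Nat.card {v : Fin 4 → K | v ≠ 0 ∧ descartesForm v = 0} : ℚ) =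
      if IsSquare (-1 : K) then 1 / ((q : ℚ) + 1) else ((q : ℚ) + 1) / ((q : ℚ) ^ 2 + 1) := by
  have e3 : (Nat.card {v : Fin 3 → K | v ≠ 0 ∧ descartesForm ![v 0, v 1, v 2, 0] = 0} : ℚ) =
      (q : ℚ) ^ 2 - 1 := by
    rw [eq_sub_iff_add_eq]
    exact_mod_cast
      (natCard_setOf_ne_zero_and_add_one (by simp [descartesForm_three_eq_sq_sub_mul])).trans
        (card_filter_descartesForm_three_eq_zero h2)
  have e4 : (Nat.card {v : Fin 4 → K | v ≠ 0 ∧ descartesForm v = 0} : ℤ) =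
      (if IsSquare (-1 : K) then (q : ℤ) ^ 3 + q ^ 2 - q else (q : ℤ) ^ 3 - q ^ 2 + q) - 1 := by
    rw [eq_sub_iff_add_eq, ← card_filter_descartesForm_eq_zero h2]
    exact_mod_cast natCard_setOf_ne_zero_and_add_one (by simp [descartesForm_eq_sq_add_sq_sub_mul])
  have hq : (2 : ℚ) ≤ q := by exact_mod_cast Fintype.one_lt_card
  replace e4 := congrArg (Int.cast : ℤ → ℚ) e4
  push_cast at e4
  rw [e3, e4]
  split_ifs <;> rw [div_eq_div_iff (by nlinarith) (by nlinarith)] <;> ring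

end

theorem stmt6_general (p : ℕ) (hp : p.Prime) :
    (p % 4 = 1 →
      (Nat.card {v : Fin 3 → ZMod p | v ≠ 0 ∧ descartesForm ![v 0, v 1, v 2, 0] = 0} : ℚ) /
        (Nat.card {v : Fin 4 → ZMod p | v ≠ 0 ∧ descartesForm v = 0} : ℚ) =
        1 / ((p : ℚ) + 1)) ∧
    (p % 4 = 3 →
      (Nat.card {v : Fin 3 → ZMod p | v ≠ 0 ∧ descartesForm ![v 0, v 1, v 2, 0] = 0} : ℚ) /
        (Nat.card {v : Fin 4 → ZMod p | v ≠ 0 ∧ descartesForm v = 0} : ℚ) =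
        ((p : ℚ) + 1) / ((p : ℚ) ^ 2 + 1)) := by
  have := Fact.mk hp
  have ratio (hp2 : p ≠ 2) := ratio_natCard_descartesForm_zeros (K := ZMod p)
    (Ring.two_ne_zero (by rwa [ZMod.ringChar_zmod_n]))
  simp only [ZMod.card] at ratio
  refine ⟨fun h1 => ?_, fun h3 => ?_⟩
  · rw [ratio (by omega), if_pos (ZMod.exists_sq_eq_neg_one_iff.2 (by omega))]
  · rw [ratio (by omega), if_neg (by rw [ZMod.exists_sq_eq_neg_one_iff]; omega)]

theorem stmt6 (p : ℕ) (hp : p.Prime) (hp3 : 3 < p) :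
    (p % 4 = 1 →
      (Nat.card {v : Fin 3 → ZMod p | v ≠ 0 ∧ descartesForm ![v 0, v 1, v 2, 0] = 0} : ℚ) /
        (Nat.card {v : Fin 4 → ZMod p | v ≠ 0 ∧ descartesForm v = 0} : ℚ) =
        1 / ((p : ℚ) + 1)) ∧
    (p % 4 = 3 →
      (Nat.card {v : Fin 3 → ZMod p | v ≠ 0 ∧ descartesForm ![v 0, v 1, v 2, 0] = 0} : ℚ) /
        (Nat.card {v : Fin 4 → ZMod p | v ≠ 0 ∧ descartesForm v = 0} : ℚ) =
        ((p : ℚ) + 1) / ((p : ℚ) ^ 2 + 1)) :=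
  stmt6_general p hp
end
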